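/- Suppose (M,ω) and (N,η) satisfy the hypotheses of the product Seidel theorem (M monotone, π₂(N)=0) and ψ ∈ π₁(Ham(M,ω)) satisfies S(ψ) ≠ [M] (the unit of QH_*(M;Λ)). Then ψ × id_N is a nontrivial element of π₁(Ham(M×N, ω⊕η)); in particular τ is injective on the subgroup where S is injective. -/
import Mathlib

/-- (`G1 = π₁(Ham(M,ω))`, `G2 = π₁(Ham(M×N,ω⊕η))`; `Q1`, `Q2` are
the multiplicative monoids of units of `QH_*(M;Λ)` and `QH_*(M×N;Λ)`, with identity
elements the fundamental classes `[M]`, `[M×N]`.)  The Seidel representations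
`S1, S2` are group homomorphisms, `τ(ψ) = ψ × id_N`, and
`κ : QH_*(M;Λ) → QH_{*+dim N}(M×N;Λ)`, `α⊗λ ↦ (α×[N])⊗λ`, is injective with
`κ([M]) = [M×N]` and `S2(τ ψ) = κ(S1 ψ)` (the product Seidel theorem).  Then:
if `S1(ψ) ≠ [M]` then `ψ × id_N` is a nontrivial element of `π₁(Ham(M×N,ω⊕η))`;
in particular `τ` is injective wherever `S1` is. -/
theorem product_loop_nontrivial
    (G1 G2 Q1 Q2 : Type*) [Group G1] [Group G2] [CommMonoid Q1] [CommMonoid Q2]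
    (S1 : G1 →* Q1) (S2 : G2 →* Q2) (τ : G1 →* G2)
    (κ : Q1 → Q2) (hκinj : Function.Injective κ) (hκ1 : κ 1 = 1)
    (hcomm : ∀ ψ : G1, S2 (τ ψ) = κ (S1 ψ)) :
    (∀ ψ : G1, S1 ψ ≠ 1 → τ ψ ≠ 1) ∧
    ((∀ ψ : G1, S1 ψ = 1 → ψ = 1) → Function.Injective τ) := by
  have key : ∀ ψ : G1, τ ψ = 1 → S1 ψ = 1 := by
    intro ψ h
    apply hκinj
    rw [← hcomm, h, map_one, hκ1]
  refine ⟨fun ψ h h1 => h (key ψ h1), fun hS => ?_⟩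
  have : ∀ ψ : G1, τ ψ = 1 → ψ = 1 := fun ψ h => hS ψ (key ψ h)
  intro a b hab
  have : a * b⁻¹ = 1 := this _ (by rw [map_mul, map_inv, hab, mul_inv_cancel])
  exact mul_inv_eq_one.mp this
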